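/- arXiv:1505.01583 — 5 statements merged into one kernel-verified Lean document; each statement's English description precedes it below -/
import Mathlib

section
/- Suppose for m ≥ 3 that Ω₁ + δ₁δ₁ᵀ = Ω₂ + δ₂δ₂ᵀ where Ω₁, Ω₂ are m×m diagonal matrices and δ₁, δ₂ ∈ ℝ^m each have all entries nonzero. Then Ω₁ = Ω₂ and δ₁δ₁ᵀ = δ₂δ₂ᵀ. -/
open Matrix

/-- Uniqueness of the diagonal and rank-one components of a Spearman matrix of
size `m ≥ 3`. -/
theorem stmt_7 (m : ℕ) (hm : 3 ≤ m) (d₁ d₂ : Fin m → ℝ) (δ₁ δ₂ : Fin m → ℝ)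
    (hδ₁ : ∀ i, δ₁ i ≠ 0) (hδ₂ : ∀ i, δ₂ i ≠ 0)
    (h : Matrix.diagonal d₁ + Matrix.vecMulVec δ₁ δ₁ =
          Matrix.diagonal d₂ + Matrix.vecMulVec δ₂ δ₂) :
    Matrix.diagonal d₁ = Matrix.diagonal d₂ ∧
      Matrix.vecMulVec δ₁ δ₁ = Matrix.vecMulVec δ₂ δ₂ := by
  have hoff : ∀ i j : Fin m, i ≠ j → δ₁ i * δ₁ j = δ₂ i * δ₂ j := by
    intro i j hij
    have := congrFun (congrFun h i) j
    simpa [Matrix.add_apply, Matrix.diagonal_apply_ne _ hij, Matrix.vecMulVec_apply]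
      using this
  have hsq : ∀ i : Fin m, δ₁ i * δ₁ i = δ₂ i * δ₂ i := by
    intro i
    -- pick j k distinct and different from i
    have hcard : 1 < (({i}ᶜ : Finset (Fin m)).card) := by
      rw [Finset.card_compl]
      simp only [Finset.card_singleton, Fintype.card_fin]
      omega
    obtain ⟨j, hj, k, hk, hjk⟩ := Finset.one_lt_card.mp hcard
    rw [Finset.mem_compl, Finset.mem_singleton] at hj hk
    have h1 : δ₁ i * δ₁ j = δ₂ i * δ₂ j := hoff i j (Ne.symm hj)
    have h2 : δ₁ i * δ₁ k = δ₂ i * δ₂ k := hoff i k (Ne.symm hk)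
    have h3 : δ₁ j * δ₁ k = δ₂ j * δ₂ k := hoff j k hjk
    have hjk1 : δ₁ j * δ₁ k ≠ 0 := mul_ne_zero (hδ₁ j) (hδ₁ k)
    have key : (δ₁ i * δ₁ i) * (δ₁ j * δ₁ k) = (δ₂ i * δ₂ i) * (δ₁ j * δ₁ k) := by
      calc (δ₁ i * δ₁ i) * (δ₁ j * δ₁ k) = (δ₁ i * δ₁ j) * (δ₁ i * δ₁ k) := by ring
        _ = (δ₂ i * δ₂ j) * (δ₂ i * δ₂ k) := by rw [h1, h2]
        _ = (δ₂ i * δ₂ i) * (δ₂ j * δ₂ k) := by ring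
        _ = (δ₂ i * δ₂ i) * (δ₁ j * δ₁ k) := by rw [h3]
    exact mul_right_cancel₀ hjk1 key
  have hvv : Matrix.vecMulVec δ₁ δ₁ = Matrix.vecMulVec δ₂ δ₂ := by
    ext i j
    rcases eq_or_ne i j with rfl | hij
    · simpa [Matrix.vecMulVec_apply] using hsq i
    · simpa [Matrix.vecMulVec_apply] using hoff i j hij
  refine ⟨?_, hvv⟩
  have := h
  rw [hvv] at this
  exact add_right_cancel this
end

section
/- Let G = (V, E) be an undirected graph on m vertices that is connected and contains a cycle of odd length, and let y : E → ℝ \ {0}. Then the set of solutions x ∈ (ℝ \ {0})^V to the system x_v x_w = y_{vw} for all edges v—w ∈ E contains at most two elements, and if x is a solution then so is -x. -/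
open Matrix

private lemma walk_parity {V : Type*} {G : SimpleGraph V} {x x₀ : V → ℝ}
    (hnz : ∀ v, x v ≠ 0) (hnz₀ : ∀ v, x₀ v ≠ 0)
    (h : ∀ v w, G.Adj v w → x v * x w = x₀ v * x₀ w) :
    ∀ (u w : V) (p : G.Walk u w),
      (Even p.length → x u * x₀ w = x₀ u * x w) ∧
      (Odd p.length → x u * x w = x₀ u * x₀ w) := by
  intro u w p
  induction p with
  | nil =>
    refine ⟨fun _ => mul_comm _ _, fun hoddp => ?_⟩
    simp [SimpleGraph.Walk.length_nil] at hoddp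
  | @cons a b c hab q ih =>
    have he : x a * x b = x₀ a * x₀ b := h a b hab
    have hb : x b ≠ 0 := hnz b
    have hb₀ : x₀ b ≠ 0 := hnz₀ b
    constructor
    · intro hev
      have hq : Odd q.length :=
        Nat.not_even_iff_odd.mp (Nat.even_add_one.mp (by simpa using hev))
      have h2 : x b * x c = x₀ b * x₀ c := ih.2 hq
      have key : x a * x₀ c * (x b * x₀ b) = x₀ a * x c * (x b * x₀ b) := by
        linear_combination (x₀ b * x₀ c) * he - (x₀ a * x₀ b) * h2
      exact mul_right_cancel₀ (mul_ne_zero hb hb₀) key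
    · intro hoddp
      have hq : Even q.length := by
        rcases Nat.even_or_odd q.length with h' | h'
        · exact h'
        · exact absurd (by simpa using hoddp) (Nat.not_odd_iff_even.mpr h'.add_one)
      have h2 : x b * x₀ c = x₀ b * x c := ih.1 hq
      have key : x a * x c * (x b * x₀ b) = x₀ a * x₀ c * (x b * x₀ b) := by
        linear_combination (x₀ b * x c) * he - (x₀ a * x₀ b) * h2
      exact mul_right_cancel₀ (mul_ne_zero hb hb₀) key

/-- For a connected graph containing an odd cycle and nonzero edge data `y`, the
set of solutions `x` (with all entries nonzero) of `x_v x_w = y_{vw}` over all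
edges contains at most two elements, and is closed under `x ↦ -x`. -/
theorem stmt_9 {V : Type*} (G : SimpleGraph V) (hconn : G.Connected)
    (hodd : ∃ (v : V) (c : G.Walk v v), c.IsCycle ∧ Odd c.length)
    (y : V → V → ℝ) (hy : ∀ v w, G.Adj v w → y v w ≠ 0) :
    (∃ a : V → ℝ,
        {x : V → ℝ | (∀ v, x v ≠ 0) ∧ ∀ v w, G.Adj v w → x v * x w = y v w} ⊆
          {a, -a}) ∧
    ∀ x ∈ {x : V → ℝ | (∀ v, x v ≠ 0) ∧ ∀ v w, G.Adj v w → x v * x w = y v w},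
      -x ∈ {x : V → ℝ | (∀ v, x v ≠ 0) ∧ ∀ v w, G.Adj v w → x v * x w = y v w} := by
  constructor
  · by_cases hne : {x : V → ℝ | (∀ v, x v ≠ 0) ∧
        ∀ v w, G.Adj v w → x v * x w = y v w}.Nonempty
    · obtain ⟨x₀, hx₀nz, hx₀⟩ := hne
      refine ⟨x₀, fun x hx => ?_⟩
      obtain ⟨hxnz, hxe⟩ := hx
      have hrel : ∀ v w, G.Adj v w → x v * x w = x₀ v * x₀ w := fun v w hvw => by
        rw [hxe v w hvw, hx₀ v w hvw]
      obtain ⟨v, c, _, hcodd⟩ := hodd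
      have hvv : x v * x v = x₀ v * x₀ v :=
        (walk_parity hxnz hx₀nz hrel v v c).2 hcodd
      rcases mul_self_eq_mul_self_iff.mp hvv with hv | hv
      · left
        funext w
        obtain ⟨p⟩ := hconn v w
        rcases Nat.even_or_odd p.length with hp | hp
        · have := (walk_parity hxnz hx₀nz hrel v w p).1 hp
          rw [hv] at this
          exact mul_left_cancel₀ (hx₀nz v) this.symm
        · have := (walk_parity hxnz hx₀nz hrel v w p).2 hp
          rw [hv] at this
          exact mul_left_cancel₀ (hx₀nz v) this
      · right
        funext w
        obtain ⟨p⟩ := hconn v w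
        rcases Nat.even_or_odd p.length with hp | hp
        · have h1 := (walk_parity hxnz hx₀nz hrel v w p).1 hp
          rw [hv] at h1
          have h2 : x₀ v * x w = x₀ v * (- x₀ w) := by linarith
          have := mul_left_cancel₀ (hx₀nz v) h2
          simpa using this
        · have h1 := (walk_parity hxnz hx₀nz hrel v w p).2 hp
          rw [hv] at h1
          have h2 : x₀ v * x w = x₀ v * (- x₀ w) := by linarith
          have := mul_left_cancel₀ (hx₀nz v) h2
          simpa using this
    · have : Nonempty V := hconn.nonempty
      exact ⟨fun _ => 1, fun x hx => absurd ⟨x, hx⟩ hne⟩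
  · rintro x ⟨hxnz, hxe⟩
    refine ⟨fun v => by simpa using hxnz v, fun v w hvw => ?_⟩
    simpa using hxe v w hvw
end

section
/- Let G be a DAG on vertex set {1, …, m} with nodes in topological order, Λ ∈ ℝ_E, Ω diagonal with positive diagonal, and Σ = (I - Λᵀ)⁻¹ Ω (I - Λ)⁻¹. Then for each node v with parent set pa(v) = {w : w → v ∈ E}, the principal submatrix Σ_{pa(v), pa(v)} is invertible and Λ_{pa(v), v} = (Σ_{pa(v), pa(v)})⁻¹ Σ_{pa(v), v} and Ω_{vv} = Σ_{vv} - Σ_{v, pa(v)} (Σ_{pa(v), pa(v)})⁻¹ Σ_{pa(v), v}. Consequently, the map (Λ, Ω) ↦ (I - Λᵀ)⁻¹ Ω (I - Λ)⁻¹ is injective on ℝ_E × diag⁺_m. -/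
/-!
Since `Λ` is strictly upper triangular, `I - Λ` is unitriangular. Hence `Σ` is positive
definite, so every principal submatrix `Σ_{pa(v),pa(v)}` is invertible, and
`Σ (I - Λ) = (I - Λ)⁻ᵀ Ω` is lower triangular. Above the diagonal, column `v` of this product
gives `Σ_{w,v} = Σ_{w,pa(v)} Λ_{pa(v),v}` for `w < v`, in particular for `w ∈ pa(v)`, which is
the regression formula for `Λ_{pa(v),v}`. Multiplying by `I - Λᵀ` on the left gives `Ω`, and its
`(v, v)` entry is `Ω_{vv} = Σ_{vv} - Σ_{v,pa(v)} Λ_{pa(v),v}`. Both formulas only involve `Σ`,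
which gives injectivity.
-/

open Matrix

namespace Matrix

section Triangular

variable {ι R : Type*} [LinearOrder ι] [CommRing R] {Λ : Matrix ι ι R}

theorem isUpperTriangular_one_sub (hΛ : ∀ ⦃i j⦄, j ≤ i → Λ i j = 0) :
    (1 - Λ).IsUpperTriangular :=
  blockTriangular_one.sub fun _ _ hji => hΛ hji.le

theorem one_sub_transpose_eq (Λ : Matrix ι ι R) : 1 - Λᵀ = (1 - Λ)ᵀ := by
  rw [transpose_sub, transpose_one]

theorem strictUpper_of_support {E : Finset (ι × ι)} (hE : ∀ e ∈ E, e.1 < e.2)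
    (hΛ : ∀ w v, (w, v) ∉ E → Λ w v = 0) : ∀ ⦃i j⦄, j ≤ i → Λ i j = 0 :=
  fun i j hji => hΛ i j fun hij => (hE _ hij).not_ge hji

variable [Fintype ι]

theorem isUnit_det_one_sub (hΛ : ∀ ⦃i j⦄, j ≤ i → Λ i j = 0) : IsUnit (1 - Λ).det := by
  rw [det_of_isUpperTriangular (isUpperTriangular_one_sub hΛ),
    Finset.prod_eq_one fun i _ => by simp [hΛ le_rfl]]
  exact isUnit_one

theorem mul_one_sub_apply (S Λ : Matrix ι ι R) (i j : ι) :
    (S * (1 - Λ)) i j = S i j - ∑ k, S i k * Λ k j := by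
  rw [Matrix.mul_sub, Matrix.mul_one, Matrix.sub_apply, mul_apply]

theorem one_sub_transpose_mul_apply (Λ S : Matrix ι ι R) (i j : ι) :
    ((1 - Λᵀ) * S) i j = S i j - ∑ k, Λ k i * S k j := by
  rw [Matrix.sub_mul, Matrix.one_mul, Matrix.sub_apply, mul_apply]
  rfl

end Triangular

variable {ι : Type*} [Fintype ι] [LinearOrder ι]

noncomputable def semCovariance (Λ : Matrix ι ι ℝ) (ω : ι → ℝ) : Matrix ι ι ℝ :=
  (1 - Λᵀ)⁻¹ * diagonal ω * (1 - Λ)⁻¹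

section StrictlyUpper

variable {Λ : Matrix ι ι ℝ}

theorem posDef_semCovariance (hΛ : ∀ ⦃i j⦄, j ≤ i → Λ i j = 0) {ω : ι → ℝ}
    (hω : ∀ i, 0 < ω i) : (semCovariance Λ ω).PosDef := by
  have hunit : IsUnit (1 - Λ)⁻¹ :=
    (isUnit_iff_isUnit_det _).mpr (isUnit_nonsing_inv_det _ (isUnit_det_one_sub hΛ))
  have h := (posDef_diagonal_iff.mpr hω).conjTranspose_mul_mul_same
    (mulVec_injective_iff_isUnit.mpr hunit)
  rwa [conjTranspose_eq_transpose_of_trivial, transpose_nonsing_inv, ← one_sub_transpose_eq] at h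

theorem semCovariance_mul_one_sub (hΛ : ∀ ⦃i j⦄, j ≤ i → Λ i j = 0) (ω : ι → ℝ) :
    semCovariance Λ ω * (1 - Λ) = (1 - Λᵀ)⁻¹ * diagonal ω := by
  rw [semCovariance, mul_assoc, nonsing_inv_mul _ (isUnit_det_one_sub hΛ), mul_one]

theorem one_sub_transpose_mul_semCovariance_mul_one_sub (hΛ : ∀ ⦃i j⦄, j ≤ i → Λ i j = 0)
    (ω : ι → ℝ) : (1 - Λᵀ) * (semCovariance Λ ω * (1 - Λ)) = diagonal ω := by
  have hdet : IsUnit (1 - Λᵀ).det := by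
    rw [one_sub_transpose_eq, det_transpose]
    exact isUnit_det_one_sub hΛ
  rw [semCovariance_mul_one_sub hΛ, mul_nonsing_inv_cancel_left _ _ hdet]

-- `(I - Λ)⁻¹` is upper triangular, so `Σ (I - Λ) = (I - Λ)⁻ᵀ Ω` is lower triangular.
theorem semCovariance_mul_one_sub_apply_of_lt (hΛ : ∀ ⦃i j⦄, j ≤ i → Λ i j = 0)
    (ω : ι → ℝ) {w v : ι} (hwv : w < v) : (semCovariance Λ ω * (1 - Λ)) w v = 0 := by
  have := invertibleOfIsUnitDet (1 - Λ) (isUnit_det_one_sub hΛ)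
  rw [semCovariance_mul_one_sub hΛ, one_sub_transpose_eq, ← transpose_nonsing_inv,
    mul_diagonal, transpose_apply,
    blockTriangular_inv_of_blockTriangular (isUpperTriangular_one_sub hΛ) hwv, zero_mul]

theorem semCovariance_mul_one_sub_apply_self (hΛ : ∀ ⦃i j⦄, j ≤ i → Λ i j = 0)
    (ω : ι → ℝ) (v : ι) : (semCovariance Λ ω * (1 - Λ)) v v = ω v := by
  have hcol : ∑ k, Λ k v * (semCovariance Λ ω * (1 - Λ)) k v = 0 := by
    refine Finset.sum_eq_zero fun k _ => ?_
    rcases lt_or_ge k v with hkv | hvk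
    · rw [semCovariance_mul_one_sub_apply_of_lt hΛ ω hkv, mul_zero]
    · rw [hΛ hvk, zero_mul]
  have h := congrFun₂ (one_sub_transpose_mul_semCovariance_mul_one_sub hΛ ω) v v
  rwa [one_sub_transpose_mul_apply, hcol, sub_zero, diagonal_apply_eq] at h

theorem semCovariance_apply_of_lt (hΛ : ∀ ⦃i j⦄, j ≤ i → Λ i j = 0)
    (ω : ι → ℝ) {w v : ι} (hwv : w < v) :
    semCovariance Λ ω w v = ∑ k, semCovariance Λ ω w k * Λ k v := by
  have h := semCovariance_mul_one_sub_apply_of_lt hΛ ω hwv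
  rwa [mul_one_sub_apply, sub_eq_zero] at h

theorem eq_semCovariance_apply_self_sub (hΛ : ∀ ⦃i j⦄, j ≤ i → Λ i j = 0)
    (ω : ι → ℝ) (v : ι) :
    ω v = semCovariance Λ ω v v - ∑ k, semCovariance Λ ω v k * Λ k v := by
  rw [← mul_one_sub_apply, semCovariance_mul_one_sub_apply_self hΛ]

end StrictlyUpper

section Dag

variable {E : Finset (ι × ι)} {Λ : Matrix ι ι ℝ}

theorem sum_mul_apply_eq_sum_parents (hΛ : ∀ w v, (w, v) ∉ E → Λ w v = 0) (g : ι → ℝ)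
    (v : ι) : ∑ k, g k * Λ k v = ∑ k : {w // (w, v) ∈ E}, g k * Λ k v :=
  Finset.sum_congr_set {w | (w, v) ∈ E} _ _ (fun _ _ => rfl)
    fun k hk => by rw [hΛ k v hk, mul_zero]

theorem semCovariance_parents_eq_mulVec (hE : ∀ e ∈ E, e.1 < e.2)
    (hΛ : ∀ w v, (w, v) ∉ E → Λ w v = 0) (ω : ι → ℝ) (v : ι) :
    (fun w : {w // (w, v) ∈ E} => semCovariance Λ ω w v) =
      (semCovariance Λ ω).submatrix Subtype.val Subtype.val *ᵥ
        fun w : {w // (w, v) ∈ E} => Λ w v := by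
  funext w
  rw [semCovariance_apply_of_lt (strictUpper_of_support hE hΛ) ω (hE _ w.2),
    sum_mul_apply_eq_sum_parents hΛ]
  rfl

theorem eq_semCovariance_apply_self_sub_parents (hE : ∀ e ∈ E, e.1 < e.2)
    (hΛ : ∀ w v, (w, v) ∉ E → Λ w v = 0) (ω : ι → ℝ) (v : ι) :
    ω v = semCovariance Λ ω v v -
      (fun w : {w // (w, v) ∈ E} => semCovariance Λ ω v w) ⬝ᵥ
        fun w : {w // (w, v) ∈ E} => Λ w v := by
  rw [eq_semCovariance_apply_self_sub (strictUpper_of_support hE hΛ) ω v,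
    sum_mul_apply_eq_sum_parents hΛ]
  rfl

theorem semCovariance_regression_parents (hE : ∀ e ∈ E, e.1 < e.2)
    (hΛ : ∀ w v, (w, v) ∉ E → Λ w v = 0) {ω : ι → ℝ} (hω : ∀ i, 0 < ω i) (v : ι) :
    IsUnit ((semCovariance Λ ω).submatrix (Subtype.val : {w // (w, v) ∈ E} → ι)
      (Subtype.val : {w // (w, v) ∈ E} → ι)) ∧
    (fun w : {w // (w, v) ∈ E} => Λ w v) =
      ((semCovariance Λ ω).submatrix Subtype.val Subtype.val)⁻¹ *ᵥ
        (fun w : {w // (w, v) ∈ E} => semCovariance Λ ω w v) ∧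
    ω v = semCovariance Λ ω v v -
      (fun w : {w // (w, v) ∈ E} => semCovariance Λ ω v w) ⬝ᵥ
        (((semCovariance Λ ω).submatrix Subtype.val Subtype.val)⁻¹ *ᵥ
          fun w : {w // (w, v) ∈ E} => semCovariance Λ ω w v) := by
  have hunit : IsUnit ((semCovariance Λ ω).submatrix
      (Subtype.val : {w // (w, v) ∈ E} → ι) (Subtype.val : {w // (w, v) ∈ E} → ι)) :=
    ((posDef_semCovariance (strictUpper_of_support hE hΛ) hω).submatrix
      Subtype.val_injective).isUnit
  have hcoef : (fun w : {w // (w, v) ∈ E} => Λ w v) =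
      ((semCovariance Λ ω).submatrix Subtype.val Subtype.val)⁻¹ *ᵥ
        (fun w : {w // (w, v) ∈ E} => semCovariance Λ ω w v) := by
    rw [semCovariance_parents_eq_mulVec hE hΛ, mulVec_mulVec,
      nonsing_inv_mul _ ((isUnit_iff_isUnit_det _).mp hunit), one_mulVec]
  refine ⟨hunit, hcoef, ?_⟩
  rw [← hcoef]
  exact eq_semCovariance_apply_self_sub_parents hE hΛ ω v

theorem eq_and_eq_of_semCovariance_eq (hE : ∀ e ∈ E, e.1 < e.2)
    {Λ₁ Λ₂ : Matrix ι ι ℝ} {ω₁ ω₂ : ι → ℝ}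
    (hΛ₁ : ∀ w v, (w, v) ∉ E → Λ₁ w v = 0) (hΛ₂ : ∀ w v, (w, v) ∉ E → Λ₂ w v = 0)
    (hω₁ : ∀ i, 0 < ω₁ i) (hω₂ : ∀ i, 0 < ω₂ i)
    (h : semCovariance Λ₁ ω₁ = semCovariance Λ₂ ω₂) : Λ₁ = Λ₂ ∧ ω₁ = ω₂ := by
  have key₁ := semCovariance_regression_parents hE hΛ₁ hω₁
  have key₂ := semCovariance_regression_parents hE hΛ₂ hω₂
  constructor
  · ext w v
    by_cases hwv : (w, v) ∈ E
    · have hcol := (key₁ v).2.1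
      rw [h, ← (key₂ v).2.1] at hcol
      exact congrFun hcol ⟨w, hwv⟩
    · rw [hΛ₁ w v hwv, hΛ₂ w v hwv]
  · funext v
    rw [(key₁ v).2.2, (key₂ v).2.2, h]

end Dag

end Matrix

/-- Identifiability of fully observed Gaussian DAG models: writing
`Σ = (I - Λᵀ)⁻¹ Ω (I - Λ)⁻¹`, the parameters are recovered by
`Λ_{pa(v),v} = Σ_{pa(v),pa(v)}⁻¹ Σ_{pa(v),v}` and
`Ω_{vv} = Σ_{vv} - Σ_{v,pa(v)} Σ_{pa(v),pa(v)}⁻¹ Σ_{pa(v),v}`; consequently the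
parametrization `(Λ, Ω) ↦ Σ` is injective on `ℝ_E × diag⁺_m`. -/
theorem stmt_14 (m : ℕ) (E : Finset (Fin m × Fin m)) (hE : ∀ e ∈ E, e.1 < e.2) :
    (∀ (Λ : Matrix (Fin m) (Fin m) ℝ), (∀ w v, (w, v) ∉ E → Λ w v = 0) →
      ∀ (ω : Fin m → ℝ), (∀ i, 0 < ω i) →
      ∀ v : Fin m,
        IsUnit (Matrix.submatrix
            ((1 - Λᵀ)⁻¹ * Matrix.diagonal ω * (1 - Λ)⁻¹)
            (fun w : {w : Fin m // (w, v) ∈ E} => (w : Fin m))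
            (fun w : {w : Fin m // (w, v) ∈ E} => (w : Fin m))) ∧
        (fun w : {w : Fin m // (w, v) ∈ E} => Λ (w : Fin m) v) =
          (Matrix.submatrix
              ((1 - Λᵀ)⁻¹ * Matrix.diagonal ω * (1 - Λ)⁻¹)
              (fun w : {w : Fin m // (w, v) ∈ E} => (w : Fin m))
              (fun w : {w : Fin m // (w, v) ∈ E} => (w : Fin m)))⁻¹ *ᵥ
            (fun w : {w : Fin m // (w, v) ∈ E} =>
              ((1 - Λᵀ)⁻¹ * Matrix.diagonal ω * (1 - Λ)⁻¹) (w : Fin m) v) ∧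
        ω v = ((1 - Λᵀ)⁻¹ * Matrix.diagonal ω * (1 - Λ)⁻¹) v v -
          (fun w : {w : Fin m // (w, v) ∈ E} =>
              ((1 - Λᵀ)⁻¹ * Matrix.diagonal ω * (1 - Λ)⁻¹) v (w : Fin m)) ⬝ᵥ
            ((Matrix.submatrix
                ((1 - Λᵀ)⁻¹ * Matrix.diagonal ω * (1 - Λ)⁻¹)
                (fun w : {w : Fin m // (w, v) ∈ E} => (w : Fin m))
                (fun w : {w : Fin m // (w, v) ∈ E} => (w : Fin m)))⁻¹ *ᵥ
              (fun w : {w : Fin m // (w, v) ∈ E} =>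
                ((1 - Λᵀ)⁻¹ * Matrix.diagonal ω * (1 - Λ)⁻¹) (w : Fin m) v))) ∧
    ∀ (Λ₁ Λ₂ : Matrix (Fin m) (Fin m) ℝ) (ω₁ ω₂ : Fin m → ℝ),
      (∀ w v, (w, v) ∉ E → Λ₁ w v = 0) → (∀ w v, (w, v) ∉ E → Λ₂ w v = 0) →
      (∀ i, 0 < ω₁ i) → (∀ i, 0 < ω₂ i) →
      (1 - Λ₁ᵀ)⁻¹ * Matrix.diagonal ω₁ * (1 - Λ₁)⁻¹ =
        (1 - Λ₂ᵀ)⁻¹ * Matrix.diagonal ω₂ * (1 - Λ₂)⁻¹ →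
      Λ₁ = Λ₂ ∧ ω₁ = ω₂ :=
  ⟨fun _ hΛ _ hω v => semCovariance_regression_parents hE hΛ hω v,
    fun _ _ _ _ hΛ₁ hΛ₂ hω₁ hω₂ h => eq_and_eq_of_semCovariance_eq hE hΛ₁ hΛ₂ hω₁ hω₂ h⟩
end

section
/- Suppose Ψ₁ - γ₁γ₁ᵀ = Ψ₂ - γ₂γ₂ᵀ where Ψ₁, Ψ₂ are m×m diagonal matrices and γ₁, γ₂ ∈ ℝ^m each have all entries nonzero, with m ≥ 3. Then Ψ₁ = Ψ₂ and γ₂ = γ₁ or γ₂ = -γ₁. -/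
open Matrix

/-- Uniqueness of the coSpearman decomposition for `m ≥ 3`: the diagonal part is
unique and the vector `γ` is determined up to a global sign. -/
theorem stmt_18 (m : ℕ) (hm : 3 ≤ m) (ψ₁ ψ₂ : Fin m → ℝ) (γ₁ γ₂ : Fin m → ℝ)
    (hγ₁ : ∀ i, γ₁ i ≠ 0) (hγ₂ : ∀ i, γ₂ i ≠ 0)
    (h : Matrix.diagonal ψ₁ - Matrix.vecMulVec γ₁ γ₁ =
          Matrix.diagonal ψ₂ - Matrix.vecMulVec γ₂ γ₂) :
    ψ₁ = ψ₂ ∧ (γ₂ = γ₁ ∨ γ₂ = -γ₁) := by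
  have key : ∀ i j, i ≠ j → γ₁ i * γ₁ j = γ₂ i * γ₂ j := by
    intro i j hij
    have := congrFun (congrFun h i) j
    simp [Matrix.sub_apply, Matrix.diagonal_apply_ne _ hij, Matrix.vecMulVec_apply] at this
    linarith
  have sq : ∀ i, γ₁ i * γ₁ i = γ₂ i * γ₂ i := by
    intro i
    have hcard : 1 < (Finset.univ.erase i).card := by
      rw [Finset.card_erase_of_mem (Finset.mem_univ i)]
      simp only [Finset.card_univ, Fintype.card_fin]
      omega
    obtain ⟨j, hj, k, hk, hjk⟩ := Finset.one_lt_card.mp hcard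
    have hji : j ≠ i := Finset.ne_of_mem_erase hj
    have hki : k ≠ i := Finset.ne_of_mem_erase hk
    have e1 := key j i hji
    have e2 := key k i hki
    have e3 := key j k hjk
    have h2 : γ₂ j * γ₂ k ≠ 0 := mul_ne_zero (hγ₂ j) (hγ₂ k)
    apply mul_left_cancel₀ h2
    calc γ₂ j * γ₂ k * (γ₁ i * γ₁ i) = (γ₁ j * γ₁ k) * (γ₁ i * γ₁ i) := by rw [e3]
      _ = (γ₁ j * γ₁ i) * (γ₁ k * γ₁ i) := by ring
      _ = (γ₂ j * γ₂ i) * (γ₂ k * γ₂ i) := by rw [e1, e2]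
      _ = γ₂ j * γ₂ k * (γ₂ i * γ₂ i) := by ring
  have hψ : ψ₁ = ψ₂ := by
    funext i
    have := congrFun (congrFun h i) i
    simp [Matrix.sub_apply, Matrix.diagonal_apply_eq, Matrix.vecMulVec_apply] at this
    have := sq i
    linarith
  refine ⟨hψ, ?_⟩
  set i0 : Fin m := ⟨0, by omega⟩ with hi0
  have h0 : γ₂ i0 = γ₁ i0 ∨ γ₂ i0 = -γ₁ i0 := by
    have := sq i0
    rcases mul_self_eq_mul_self_iff.mp this with h' | h'
    · exact Or.inl h'.symm
    · exact Or.inr (by linarith)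
  have cancel : ∀ i, i ≠ i0 → γ₂ i0 * γ₂ i = γ₁ i0 * γ₁ i := fun i hi =>
    (key i0 i (fun he => hi he.symm)).symm
  rcases h0 with h' | h'
  · left
    funext i
    by_cases hi : i = i0
    · rw [hi, h']
    · have := cancel i hi
      rw [h'] at this
      exact mul_left_cancel₀ (hγ₁ i0) this
  · right
    funext i
    by_cases hi : i = i0
    · rw [hi, h']; simp
    · have := cancel i hi
      rw [h'] at this
      have : γ₁ i0 * (-γ₂ i) = γ₁ i0 * γ₁ i := by linarith [this]
      have := mul_left_cancel₀ (hγ₁ i0) this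
      simp only [Pi.neg_apply]
      linarith
end

section
/- Let G = (V, E) be an undirected graph and for each connected component C of G fix a vertex. Suppose x, x' ∈ (ℝ \ {0})^V satisfy x_v x_w = x'_v x'_w for every edge {v, w} ∈ E. Then for each connected component C there is a nonzero constant t_C such that for every vertex v ∈ C, either x'_v = t_C x_v or x'_v = t_C^{-1} x_v, according to the parity of the distance from v to the fixed vertex of C along any path; moreover if C contains an odd cycle then t_C ∈ {1, -1}, so x'_v = ± x_v with a common sign on C. -/
open Matrix

private lemma walk_ratio {V : Type*} (G : SimpleGraph V)
    (x x' : V → ℝ) (hx : ∀ v, x v ≠ 0) (hx' : ∀ v, x' v ≠ 0)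
    (h : ∀ v w, G.Adj v w → x' v * x' w = x v * x w) :
    ∀ {a v : V} (p : G.Walk a v),
      x' v = if Even p.length then (x' a / x a) * x v else (x' a / x a)⁻¹ * x v := by
  intro a v p
  induction p with
  | nil => simp [div_mul_cancel₀ _ (hx _)]
  | @cons a b v hab q ih =>
    have hrb : x' b / x b = (x' a / x a)⁻¹ := by
      have := h a b hab
      rw [inv_div, div_eq_div_iff (hx b) (hx' a)]
      linear_combination this
    rw [ih, hrb]
    simp only [SimpleGraph.Walk.length_cons, Nat.even_add_one]
    by_cases he : Even q.length <;> simp [he, inv_inv]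

/-- Structure of the fibers of `x ↦ (x_v x_w)_{edges}`: on each connected
component (with a fixed root) there is a nonzero `t` such that
`x'_v = t x_v` or `x'_v = t⁻¹ x_v` according to the parity of the length of any
walk from the root to `v`; if the component contains an odd cycle then
`t = ±1`. -/
theorem stmt_19 {V : Type*} (G : SimpleGraph V)
    (r : G.ConnectedComponent → V) (hr : ∀ C, G.connectedComponentMk (r C) = C)
    (x x' : V → ℝ) (hx : ∀ v, x v ≠ 0) (hx' : ∀ v, x' v ≠ 0)
    (h : ∀ v w, G.Adj v w → x' v * x' w = x v * x w) :
    ∀ C : G.ConnectedComponent, ∃ t : ℝ, t ≠ 0 ∧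
      (∀ v : V, G.connectedComponentMk v = C → ∀ p : G.Walk (r C) v,
        x' v = if Even p.length then t * x v else t⁻¹ * x v) ∧
      ((∃ w : V, G.connectedComponentMk w = C ∧
          ∃ c : G.Walk w w, c.IsCycle ∧ Odd c.length) → t = 1 ∨ t = -1) := by
  intro C
  set a := r C
  refine ⟨x' a / x a, div_ne_zero (hx' a) (hx a), ?_, ?_⟩
  · intro v _ p
    exact walk_ratio G x x' hx hx' h p
  · rintro ⟨w, hw, c, -, hcodd⟩
    have hreach : G.Reachable a w :=
      SimpleGraph.ConnectedComponent.exact (by rw [hr C, hw])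
    obtain ⟨p⟩ := hreach
    have h1 := walk_ratio G x x' hx hx' h p
    have h2 := walk_ratio G x x' hx hx' h (p.append c)
    rw [SimpleGraph.Walk.length_append] at h2
    set t := x' a / x a with ht
    have ht0 : t ≠ 0 := div_ne_zero (hx' a) (hx a)
    have hc : ¬ Even c.length := Nat.not_even_iff_odd.mpr hcodd
    have hpar : Even (p.length + c.length) ↔ ¬ Even p.length := by
      simp [Nat.even_add, hc]
    have htt : t = t⁻¹ := by
      by_cases he : Even p.length
      · rw [if_pos he] at h1
        rw [if_neg (by simp [hpar, he])] at h2
        have := h1.symm.trans h2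
        exact mul_right_cancel₀ (hx w) this
      · rw [if_neg he] at h1
        rw [if_pos (hpar.mpr he)] at h2
        exact (mul_right_cancel₀ (hx w) (h1.symm.trans h2)).symm
    have : t * t = 1 := by
      field_simp at htt
      linarith [htt]
    rcases mul_self_eq_one_iff.mp this with h | h
    · exact Or.inl h
    · exact Or.inr h
end
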